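/- arXiv:1708.01926 — 7 statements merged into one kernel-verified Lean document; each statement's English description precedes it below -/
import Mathlib

section
/- Let A : ℂ^N → ℂ^N be linear, let P ⊆ ℂ^N be a subspace, let {ωⱼ}ⱼ≥1 be nonzero complex scalars, and define the Sonneveld spaces recursively: G₀ an A-invariant subspace, G_{j+1} = (I − ω_{j+1}A) '' (G_j ∩ P^⊥). Then the Sonneveld spaces are nested: G_{j+1} ⊆ G_j for all j ≥ 0. -/
/-- Sonneveld spaces are nested: `G (j+1) ⊆ G j` for all `j`. -/
theorem stmt_1 {N : ℕ} (A : Module.End ℂ (EuclideanSpace ℂ (Fin N)))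
    (P : Submodule ℂ (EuclideanSpace ℂ (Fin N)))
    (ω : ℕ → ℂ) (hω : ∀ j, ω j ≠ 0)
    (G : ℕ → Submodule ℂ (EuclideanSpace ℂ (Fin N)))
    (hG0 : ∀ x ∈ G 0, A x ∈ G 0)
    (hrec : ∀ j, G (j + 1) = Submodule.map (1 - ω (j + 1) • A) (G j ⊓ Pᗮ)) :
    ∀ j, G (j + 1) ≤ G j := by
  intro j
  induction j with
  | zero =>
    intro x hx
    rw [hrec 0] at hx
    obtain ⟨y, ⟨hyG, _⟩, rfl⟩ := hx
    simp only [LinearMap.sub_apply, Module.End.one_apply, LinearMap.smul_apply]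
    exact (G 0).sub_mem hyG ((G 0).smul_mem _ (hG0 y hyG))
  | succ j ih =>
    intro x hx
    rw [hrec (j + 1)] at hx
    obtain ⟨y, ⟨hyG, hyP⟩, rfl⟩ := hx
    have hyGj : y ∈ G j := ih hyG
    have hz : y - ω (j + 1) • A y ∈ G (j + 1) := by
      rw [hrec j]
      exact ⟨y, ⟨hyGj, hyP⟩, by simp⟩
    have hAy : A y ∈ G (j + 1) := by
      have := (G (j + 1)).sub_mem hyG hz
      have h2 : y - (y - ω (j + 1) • A y) = ω (j + 1) • A y := by abel
      rw [h2] at this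
      have := (G (j + 1)).smul_mem (ω (j + 1))⁻¹ this
      rwa [smul_smul, inv_mul_cancel₀ (hω (j + 1)), one_smul] at this
    simp only [LinearMap.sub_apply, Module.End.one_apply, LinearMap.smul_apply]
    exact (G (j + 1)).sub_mem hyG ((G (j + 1)).smul_mem _ hAy)
end

section
/- Let A : ℂ^N → ℂ^N be linear, P ⊆ ℂ^N a subspace, {ωⱼ} nonzero scalars, and {G_j} the Sonneveld spaces as defined recursively. Then for every j ≥ 0 and every x ∈ G_j ∩ P^⊥ one has A·x ∈ G_j. -/
/-- Vectors in `G j ∩ P^⊥` have their images under `A` remaining in `G j`. -/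
theorem stmt_2 {N : ℕ} (A : Module.End ℂ (EuclideanSpace ℂ (Fin N)))
    (P : Submodule ℂ (EuclideanSpace ℂ (Fin N)))
    (ω : ℕ → ℂ) (hω : ∀ j, ω j ≠ 0)
    (G : ℕ → Submodule ℂ (EuclideanSpace ℂ (Fin N)))
    (hG0 : ∀ x ∈ G 0, A x ∈ G 0)
    (hrec : ∀ j, G (j + 1) = Submodule.map (1 - ω (j + 1) • A) (G j ⊓ Pᗮ)) :
    ∀ j, ∀ x ∈ G j ⊓ Pᗮ, A x ∈ G j := by
  intro j
  induction j with
  | zero => exact fun x hx => hG0 x hx.1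
  | succ j ih =>
    -- nesting: G (j+1) ⊆ G j
    have hnest : G (j + 1) ≤ G j := by
      rw [hrec j]
      rintro y ⟨z, hz, rfl⟩
      have hz1 : z ∈ G j := hz.1
      have hAz : A z ∈ G j := ih z hz
      have : (1 - ω (j + 1) • A) z = z - ω (j + 1) • A z := by
        simp [LinearMap.sub_apply, LinearMap.smul_apply]
      rw [this]
      exact (G j).sub_mem hz1 ((G j).smul_mem _ hAz)
    intro x hx
    have hxG : x ∈ G j ⊓ Pᗮ := ⟨hnest hx.1, hx.2⟩
    have hmem : (1 - ω (j + 1) • A) x ∈ G (j + 1) := by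
      rw [hrec j]; exact ⟨x, hxG, rfl⟩
    have hx1 : x ∈ G (j + 1) := hx.1
    have heq : A x = (ω (j + 1))⁻¹ • (x - (1 - ω (j + 1) • A) x) := by
      have : (1 - ω (j + 1) • A) x = x - ω (j + 1) • A x := by
        simp [LinearMap.sub_apply, LinearMap.smul_apply]
      rw [this]
      rw [sub_sub_cancel, smul_smul, inv_mul_cancel₀ (hω (j + 1)), one_smul]
    rw [heq]
    exact (G (j + 1)).smul_mem _ ((G (j + 1)).sub_mem hx1 hmem)
end

section
/- Let A : ℂ^N → ℂ^N, b ∈ ℂ^N, and P a subspace of ℂ^N spanned by columns p₁,…,p_s. For y ∈ ℂ^N and a polynomial q_{0,j}(t) = ∏_{i=1}^{j}(1 − ω_i t) with all ω_i ≠ 0, set x := q_{0,j}(A)·y. Then the following are equivalent: (A) y ∈ G₀ and ⟨Aᵏ y, p_q⟩ = 0 for all q = 1,…,s and k = 0,…,j+ℓ−1; (B) x ∈ G_j and ⟨Aᵏ q_{0,j}(A) y, p_q⟩ = 0 for all q = 1,…,s and k = 0,…,ℓ−1; where G_j denotes the Sonneveld space of degree j and membership x ∈ G_j is characterized by y ∈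 G₀ ∩ K_j^⊥(Aᴴ;P). -/
/-!
Write `q(t) = ∏ (1 - ω_i t)`, a polynomial of degree exactly `j` since all `ω_i ≠ 0`, with
coefficients `c_m`. Then `⟨Aᵏ x, p⟩ = ∑_{m ≤ j} conj c_m ⟨Aᵏ⁺ᵐ y, p⟩`, so once the moments
`⟨Aᵏ y, p⟩` vanish for `k < j`, their vanishing for `k < j + ℓ` is equivalent to that of
`⟨Aᵏ x, p⟩` for `k < ℓ`: solve for the top term, whose coefficient `conj c_j` is nonzero.
-/

open Polynomial Finset

theorem forall_lt_add_eq_zero_iff {R : Type*} [Semiring R] [NoZeroDivisors R]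
    {f d : ℕ → R} {j : ℕ} (hd : d j ≠ 0) (ℓ : ℕ) :
    (∀ k < j + ℓ, f k = 0) ↔
      (∀ k < j, f k = 0) ∧ ∀ k < ℓ, ∑ m ∈ range (j + 1), d m * f (k + m) = 0 := by
  refine ⟨fun h => ⟨fun k hk => h k (by omega), fun k hk => sum_eq_zero fun m hm => ?_⟩,
    fun ⟨hlow, hsum⟩ k => ?_⟩
  · rw [h (k + m) (by grind), mul_zero]
  induction k using Nat.strong_induction_on with
  | _ k ih =>
    intro hk
    by_cases hkj : k < j
    · exact hlow k hkj
    obtain ⟨t, rfl⟩ : ∃ t, k = t + j := ⟨k - j, by omega⟩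
    have hlower : ∑ m ∈ range j, d m * f (t + m) = 0 :=
      sum_eq_zero fun m hm => by rw [ih (t + m) (by grind) (by grind), mul_zero]
    have htop := hsum t (by omega)
    rw [sum_range_succ, hlower, zero_add] at htop
    exact (mul_eq_zero.mp htop).resolve_left hd

theorem inner_pow_apply_aeval_apply {𝕜 E : Type*} [RCLike 𝕜] [NormedAddCommGroup E]
    [InnerProductSpace 𝕜 E] (A : Module.End 𝕜 E) (q : 𝕜[X]) (y v : E) (k : ℕ) :
    inner 𝕜 ((A ^ k) (aeval A q y)) v =
      ∑ m ∈ range (q.natDegree + 1),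
        starRingEnd 𝕜 (q.coeff m) * inner 𝕜 ((A ^ (k + m)) y) v := by
  simp [aeval_eq_sum_range, LinearMap.sum_apply, sum_inner, inner_smul_left, pow_add]

section OneSubSmulX

variable {K : Type*} [Field K]

theorem natDegree_one_sub_smul_X {c : K} (hc : c ≠ 0) : (1 - c • X : K[X]).natDegree = 1 := by
  rw [smul_eq_C_mul]
  compute_degree!

theorem one_sub_smul_X_ne_zero {c : K} (hc : c ≠ 0) : (1 - c • X : K[X]) ≠ 0 := fun h => by
  simpa [h] using natDegree_one_sub_smul_X hc

variable {ω : ℕ → K} (hω : ∀ i, ω i ≠ 0) (j : ℕ)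
include hω

theorem list_prod_one_sub_smul_X_ne_zero :
    ((List.range j).map fun i => (1 - ω (i + 1) • X : K[X])).prod ≠ 0 :=
  List.prod_ne_zero (by simpa using fun i _ => one_sub_smul_X_ne_zero (hω (i + 1)))

theorem natDegree_list_prod_one_sub_smul_X :
    ((List.range j).map fun i => (1 - ω (i + 1) • X : K[X])).prod.natDegree = j := by
  rw [← Multiset.prod_coe, natDegree_multiset_prod]
  · simp [Function.comp_def, natDegree_one_sub_smul_X, hω]
  · simpa using fun i _ => one_sub_smul_X_ne_zero (hω (i + 1))

end OneSubSmulX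

/-- Core equivalence in the proof of the general recursion of Sonneveld spaces
(Lemma 2): with `x = q_{0,j}(A) y`, condition (A) `y ∈ G₀ ∧ ⟨Aᵏy, p_q⟩ = 0` for
`k < j + ℓ` is equivalent to (B) `x ∈ G_j ∧ ⟨Aᵏx, p_q⟩ = 0` for `k < ℓ`. -/
theorem stmt_3 {N s : ℕ} (A : Module.End ℂ (EuclideanSpace ℂ (Fin N)))
    (p : Fin s → EuclideanSpace ℂ (Fin N))
    (ω : ℕ → ℂ) (hω : ∀ i, ω i ≠ 0) (j ℓ : ℕ)
    (G0 Gj : Submodule ℂ (EuclideanSpace ℂ (Fin N)))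
    (y x : EuclideanSpace ℂ (Fin N))
    (hx : x = (((List.range j).map
        (fun i => (1 : Module.End ℂ (EuclideanSpace ℂ (Fin N))) - ω (i + 1) • A)).prod) y)
    (hchar : x ∈ Gj ↔
      (y ∈ G0 ∧ ∀ q : Fin s, ∀ k < j, (inner ℂ ((A ^ k) y) (p q) : ℂ) = 0)) :
    (y ∈ G0 ∧ ∀ q : Fin s, ∀ k < j + ℓ, (inner ℂ ((A ^ k) y) (p q) : ℂ) = 0)
      ↔ (x ∈ Gj ∧ ∀ q : Fin s, ∀ k < ℓ, (inner ℂ ((A ^ k) x) (p q) : ℂ) = 0) := by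
  set c : ℂ[X] := ((List.range j).map fun i => (1 - ω (i + 1) • X : ℂ[X])).prod
  have hxc : x = aeval A c y := by simp [hx, c, map_list_prod, Function.comp_def]
  have hdeg : c.natDegree = j := natDegree_list_prod_one_sub_smul_X hω j
  have htop : starRingEnd ℂ (c.coeff j) ≠ 0 := by
    rw [← hdeg, coeff_natDegree, _root_.map_ne_zero, leadingCoeff_ne_zero]
    exact list_prod_one_sub_smul_X_ne_zero hω j
  have hmoments (r : Fin s) : (∀ k < j + ℓ, inner ℂ ((A ^ k) y) (p r) = 0) ↔
      (∀ k < j, inner ℂ ((A ^ k) y) (p r) = 0) ∧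
        ∀ k < ℓ, inner ℂ ((A ^ k) x) (p r) = 0 := by
    simp only [hxc, inner_pow_apply_aeval_apply, hdeg]
    exact forall_lt_add_eq_zero_iff (f := fun k => inner ℂ ((A ^ k) y) (p r)) htop ℓ
  simp only [hmoments, forall_and, hchar, and_assoc]
end

section
/- Suppose the Arnoldi relation A·W_{:,1:s} = W_{:,1:(s+1)}·Q_H·R_H holds with W_{:,1:(s+1)} having orthonormal columns, Q_H ∈ ℂ^{(s+1)×s} having orthonormal columns, and R_H ∈ ℂ^{s×s} upper triangular invertible. Let P ∈ ℂ^{N×s}, Y := Pᴴ W_{:,1:(s+1)}, Z := Y·Q_H with LQ-decomposition Z = L_Z·Q_Zᴴ (L_Z lower triangular invertible, Q_Z unitary). Define V⁻¹ := W_{:,1:s}·(R_H⁻¹·Q_Z) and V⁰ := W_{:,1:(s+1)}·(Q_H·Q_Z). Then: (i) V⁰ = A·V⁻¹, (ii) V⁰ has orthonormal columns, and (iii) Pᴴ·V⁰ = L_Z is lower triangular. -/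
open Matrix

/-- Properties of the projector matrices constructed by the GMstab
Initialisation routine: `V⁰ = A·V⁻¹`, `V⁰` has orthonormal columns, and
`Pᴴ·V⁰ = L_Z` is lower triangular. -/
theorem stmt_11 {N s : ℕ}
    (A : Matrix (Fin N) (Fin N) ℂ)
    (W : Matrix (Fin N) (Fin (s + 1)) ℂ) (hW : Wᴴ * W = 1)
    (QH : Matrix (Fin (s + 1)) (Fin s) ℂ) (hQH : QHᴴ * QH = 1)
    (RH : Matrix (Fin s) (Fin s) ℂ)
    (hRHtri : ∀ i j : Fin s, j < i → RH i j = 0) (hRH : IsUnit RH)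
    (Ws : Matrix (Fin N) (Fin s) ℂ) (hWs : Ws = W.submatrix id Fin.castSucc)
    (hArnoldi : A * Ws = W * (QH * RH))
    (P : Matrix (Fin N) (Fin s) ℂ)
    (Y : Matrix (Fin s) (Fin (s + 1)) ℂ) (hY : Y = Pᴴ * W)
    (Z : Matrix (Fin s) (Fin s) ℂ) (hZ : Z = Y * QH)
    (LZ QZ : Matrix (Fin s) (Fin s) ℂ)
    (hLQ : Z = LZ * QZᴴ)
    (hLZtri : ∀ i j : Fin s, i < j → LZ i j = 0) (hLZ : IsUnit LZ)
    (hQZ : QZ ∈ Matrix.unitaryGroup (Fin s) ℂ)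
    (Vm Vz : Matrix (Fin N) (Fin s) ℂ)
    (hVm : Vm = Ws * (RH⁻¹ * QZ)) (hVz : Vz = W * (QH * QZ)) :
    Vz = A * Vm ∧ Vzᴴ * Vz = 1 ∧ Pᴴ * Vz = LZ := by
  have hRHinv : RH * RH⁻¹ = 1 :=
    mul_nonsing_inv RH ((isUnit_iff_isUnit_det RH).mp hRH)
  have hQZu : QZᴴ * QZ = 1 := hQZ.1
  refine ⟨?_, ?_, ?_⟩
  · rw [hVm, hVz, ← Matrix.mul_assoc A, hArnoldi]
    simp only [Matrix.mul_assoc]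
    rw [← Matrix.mul_assoc RH, hRHinv, Matrix.one_mul]
  · rw [hVz, conjTranspose_mul, Matrix.mul_assoc, ← Matrix.mul_assoc Wᴴ, hW,
      Matrix.one_mul, conjTranspose_mul, Matrix.mul_assoc, ← Matrix.mul_assoc QHᴴ,
      hQH, Matrix.one_mul, hQZu]
  · rw [hVz, ← Matrix.mul_assoc, ← Matrix.mul_assoc, ← hY, ← hZ,
      hLQ, Matrix.mul_assoc, hQZu, Matrix.mul_one]
end

section
/- Under the setup of the Initialisation routine (A·W_{:,1:s} = W_{:,1:(s+1)}·Q_H·R_H, Y = PᴴW_{:,1:(s+1)}, Z = Y·Q_H invertible, r₀ = β·W_{:,1}), the vector ξ := R_H⁻¹·Q_Z·L_Z⁻¹·η with η := β·Y_{:,1} and Z = L_Z·Q_Zᴴ satisfies ξ = (Pᴴ·A·W_{:,1:s})⁻¹·(Pᴴ·r₀); consequently the updated residual r₀ − A·W_{:,1:s}·ξ lies in the null space of Pᴴ. -/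
open Matrix

/-- The biorthogonalisation coefficient of the GMstab Initialisation:
`ξ = R_H⁻¹ Q_Z L_Z⁻¹ η` equals `(Pᴴ A W_{:,1:s})⁻¹ (Pᴴ r₀)`, and the updated
residual `r₀ − A W_{:,1:s} ξ` lies in the null space of `Pᴴ`. -/
theorem stmt_12 {N s : ℕ}
    (A : Matrix (Fin N) (Fin N) ℂ)
    (W : Matrix (Fin N) (Fin (s + 1)) ℂ) (hW : Wᴴ * W = 1)
    (QH : Matrix (Fin (s + 1)) (Fin s) ℂ)
    (RH : Matrix (Fin s) (Fin s) ℂ) (hRH : IsUnit RH)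
    (Ws : Matrix (Fin N) (Fin s) ℂ) (hWs : Ws = W.submatrix id Fin.castSucc)
    (hArnoldi : A * Ws = W * (QH * RH))
    (P : Matrix (Fin N) (Fin s) ℂ)
    (Y : Matrix (Fin s) (Fin (s + 1)) ℂ) (hY : Y = Pᴴ * W)
    (Z : Matrix (Fin s) (Fin s) ℂ) (hZ : Z = Y * QH) (hZu : IsUnit Z)
    (LZ QZ : Matrix (Fin s) (Fin s) ℂ) (hLQ : Z = LZ * QZᴴ)
    (hLZ : IsUnit LZ) (hQZ : QZ ∈ Matrix.unitaryGroup (Fin s) ℂ)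
    (β : ℂ) (r0 : Fin N → ℂ) (hr0 : r0 = β • fun i => W i 0)
    (η : Fin s → ℂ) (hη : η = β • fun i => Y i 0)
    (ξ : Fin s → ℂ) (hξ : ξ = (RH⁻¹ * QZ * LZ⁻¹).mulVec η) :
    ξ = (Pᴴ * A * Ws)⁻¹.mulVec (Pᴴ.mulVec r0) ∧
    Pᴴ.mulVec (r0 - (A * Ws).mulVec ξ) = 0 := by
  -- Key matrix identity: Pᴴ A Ws = Z * RH
  have hM : Pᴴ * A * Ws = Z * RH := by
    rw [Matrix.mul_assoc, hArnoldi, hZ, hY]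
    rw [← Matrix.mul_assoc, ← Matrix.mul_assoc]
  -- QZᴴ is invertible with inverse QZ
  have hQZ1 : QZᴴ * QZ = 1 := by
    simpa [Matrix.star_eq_conjTranspose] using (Matrix.mem_unitaryGroup_iff'.mp hQZ)
  have hQZinv : QZᴴ⁻¹ = QZ := Matrix.inv_eq_right_inv hQZ1
  -- Z⁻¹ = QZ * LZ⁻¹
  have hZinv : Z⁻¹ = QZ * LZ⁻¹ := by
    rw [hLQ, Matrix.mul_inv_rev, hQZinv]
  have hMu : IsUnit (Z * RH) := hZu.mul hRH
  have hMinv : (Pᴴ * A * Ws)⁻¹ = RH⁻¹ * QZ * LZ⁻¹ := by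
    rw [hM, Matrix.mul_inv_rev, hZinv, Matrix.mul_assoc]
  -- Pᴴ r0 = η
  have hPr0 : Pᴴ.mulVec r0 = η := by
    rw [hr0, hη, Matrix.mulVec_smul]
    congr 1
    funext j
    simp [Matrix.mulVec, dotProduct, hY, Matrix.mul_apply]
  have h1 : ξ = (Pᴴ * A * Ws)⁻¹.mulVec (Pᴴ.mulVec r0) := by
    rw [hξ, hMinv, hPr0]
  refine ⟨h1, ?_⟩
  have hMM : (Pᴴ * A * Ws) * (Pᴴ * A * Ws)⁻¹ = 1 := by
    rw [hM]; exact Matrix.mul_nonsing_inv _ ((Matrix.isUnit_iff_isUnit_det _).mp hMu)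
  have : Pᴴ.mulVec ((A * Ws).mulVec ξ) = Pᴴ.mulVec r0 := by
    rw [h1, hPr0, Matrix.mulVec_mulVec, Matrix.mulVec_mulVec,
      ← Matrix.mul_assoc, hMM, Matrix.one_mulVec]
  rw [Matrix.mulVec_sub, this, sub_self]
end

section
/- In the augmented Arnoldi setting with W_{:,1} = (1/β)·r⁰ ∈ G_j ∩ N(Pᴴ), range(V⁰) ⊆ G_j, Y_{:,i} = Pᴴ·A·W_{:,i} and the recurrence A·W_{:,1:m} = V⁰·Z⁻¹·Y_{:,1:m} + W_{:,1:(m+1)}·H, all columns of W lie in G_j ∩ N(Pᴴ) and A·W_{:,1:m} has all columns in G_j. -/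
/-!
Write `S = G ∩ N(Pᴴ)`. If `w_i ∈ S`, then `A w_i ∈ G` by the invariance of `G`, and subtracting
`V⁰ Z⁻¹ Pᴴ A w_i` (which lies in `G`) removes the `P`-component, so
`A w_i - V⁰ Z⁻¹ Y_{:,i} = ∑_j H_{j,i} w_j` lies in `S`. Since `H` is upper Hessenberg with
nonzero subdiagonal, this sum is `H_{i+1,i} w_{i+1}` plus a combination of `w_0, …, w_i`,
so `w_{i+1} ∈ S` follows by induction on `i`.
-/

open Finset

section Hessenberg

variable {K M : Type*} [DivisionRing K] [AddCommGroup M] [Module K M]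

theorem Submodule.mem_of_hessenberg_recurrence (S : Submodule K M) {m : ℕ}
    (w : Fin (m + 1) → M) (H : Matrix (Fin (m + 1)) (Fin m) K)
    (hHess : ∀ (i : Fin m) (j : Fin (m + 1)), (i : ℕ) + 1 < (j : ℕ) → H j i = 0)
    (hsub : ∀ i : Fin m, H i.succ i ≠ 0) (h0 : w 0 ∈ S)
    (hstep : ∀ i : Fin m, w i.castSucc ∈ S → ∑ j, H j i • w j ∈ S) (j : Fin (m + 1)) :
    w j ∈ S := by
  suffices h : ∀ k ≤ j, w k ∈ S from h j le_rfl
  induction j using Fin.induction with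
  | zero =>
    intro k hk
    rwa [Fin.le_zero_iff.mp hk]
  | succ i ih =>
    have hrest : ∀ k ≠ i.succ, H k i • w k ∈ S := by
      intro k hk
      rcases le_or_gt k i.castSucc with hle | hgt
      · exact S.smul_mem _ (ih k hle)
      · have : (i : ℕ) + 1 < (k : ℕ) := by
          rw [Fin.lt_def, Fin.val_castSucc] at hgt
          have : (k : ℕ) ≠ i + 1 := fun h => hk (Fin.ext h)
          omega
        simp [hHess i k this]
    have hlead : H i.succ i • w i.succ ∈ S := by
      have hsum := hstep i (ih _ le_rfl)
      rw [← add_sum_erase _ _ (mem_univ i.succ)] at hsum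
      exact (S.add_mem_iff_left (S.sum_mem fun k hk => hrest k (ne_of_mem_erase hk))).1 hsum
    intro k hk
    rcases hk.lt_or_eq with hlt | rfl
    · exact ih k (Fin.le_castSucc_iff.mpr hlt)
    · exact (S.smul_mem_iff (hsub i)).1 hlead

end Hessenberg

section ObliqueProjection

variable {𝕜 E ι κ ν : Type*} [RCLike 𝕜] [NormedAddCommGroup E] [InnerProductSpace 𝕜 E]
  [Fintype ι]

theorem inner_sum_smul_eq_mul (p : κ → E) (v : ι → E) (B : Matrix ι ν 𝕜) (q : κ) (i : ν) :
    inner 𝕜 (p q) (∑ l, B l i • v l) =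
      (Matrix.of (fun a b => inner 𝕜 (p a) (v b)) * B) q i := by
  simp only [inner_sum, inner_smul_right, Matrix.mul_apply, Matrix.of_apply, mul_comm]

theorem inner_sub_sum_inv_mul_smul_eq_zero [DecidableEq ι] (p v : ι → E)
    (hZ : IsUnit (Matrix.of fun a b => inner 𝕜 (p a) (v b)))
    (x : ν → E) (Y : Matrix ι ν 𝕜) (hY : ∀ q i, Y q i = inner 𝕜 (p q) (x i))
    (q : ι) (i : ν) :
    inner 𝕜 (p q)
      (x i - ∑ l, ((Matrix.of fun a b => inner 𝕜 (p a) (v b))⁻¹ * Y) l i • v l) = 0 := by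
  rw [inner_sub_right, inner_sum_smul_eq_mul, Matrix.mul_nonsing_inv_cancel_left _ _
    ((Matrix.isUnit_iff_isUnit_det _).mp hZ), hY, sub_self]

end ObliqueProjection

/-- In the augmented Arnoldi setting all basis vectors lie in `G_j ∩ N(Pᴴ)`,
and their images under `A` lie in `G_j`. -/
theorem stmt_15 {s m : ℕ} {E : Type*} [NormedAddCommGroup E] [InnerProductSpace ℂ E]
    (A : Module.End ℂ E) (p : Fin s → E)
    (G : Submodule ℂ E)
    (hG : ∀ x ∈ G, (∀ q, (inner ℂ (p q) x : ℂ) = 0) → A x ∈ G)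
    (v : Fin s → E) (hv : ∀ q, v q ∈ G)
    (Z : Matrix (Fin s) (Fin s) ℂ)
    (hZ : Z = Matrix.of fun i q => (inner ℂ (p i) (v q) : ℂ))
    (hZu : IsUnit Z)
    (w : Fin (m + 1) → E)
    (hw0 : w 0 ∈ G) (hw0P : ∀ q, (inner ℂ (p q) (w 0) : ℂ) = 0)
    (Y : Matrix (Fin s) (Fin m) ℂ)
    (hY : ∀ (q : Fin s) (i : Fin m), Y q i = (inner ℂ (p q) (A (w i.castSucc)) : ℂ))
    (H : Matrix (Fin (m + 1)) (Fin m) ℂ)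
    (hHess : ∀ (i : Fin m) (j : Fin (m + 1)), (i : ℕ) + 1 < (j : ℕ) → H j i = 0)
    (hsub : ∀ i : Fin m, H i.succ i ≠ 0)
    (hrec : ∀ i : Fin m,
      A (w i.castSucc) = ∑ q, (Z⁻¹ * Y) q i • v q + ∑ j, H j i • w j) :
    (∀ j, w j ∈ G ∧ ∀ q, (inner ℂ (p q) (w j) : ℂ) = 0) ∧
    ∀ i : Fin m, A (w i.castSucc) ∈ G := by
  subst hZ
  set S : Submodule ℂ E := G ⊓ ⨅ q, LinearMap.ker (innerₛₗ ℂ (p q))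
  have mem_S : ∀ x, x ∈ S ↔ x ∈ G ∧ ∀ q, inner ℂ (p q) x = 0 := by
    simp [S]
  have hw : ∀ j, w j ∈ S := by
    refine S.mem_of_hessenberg_recurrence w H hHess hsub ((mem_S _).2 ⟨hw0, hw0P⟩) ?_
    intro i hi
    obtain ⟨hiG, hiP⟩ := (mem_S _).1 hi
    rw [eq_sub_of_add_eq' (hrec i).symm, mem_S]
    refine ⟨G.sub_mem (hG _ hiG hiP) (G.sum_mem fun q _ => G.smul_mem _ (hv q)), ?_⟩
    exact fun q => inner_sub_sum_inv_mul_smul_eq_zero p v hZu _ Y hY q i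
  have hwS : ∀ j, w j ∈ G ∧ ∀ q, inner ℂ (p q) (w j) = 0 := fun j => (mem_S _).1 (hw j)
  exact ⟨hwS, fun i => hG _ (hwS _).1 (hwS _).2⟩
end

section
/- M-space nesting: let A ∈ ℂ^{N×N} be invertible, P ⊆ ℂ^N a subspace, {ω_j} nonzero scalars, and define M₀ := K_∞(A;b¹) + K_∞(A;b²), M_{j+1} := (I − ω_{j+1}A)(M_j ∩ P^⊥) + Q_{j+1} where Q_j = span{b²} for j ≤ J and Q_j = {0} for j > J. Then M_j ⊆ M_{j−1} for all j ≥ 1. -/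
/-- M-space nesting (Theorem 2(a) for Mstab): `M_j ⊆ M_{j−1}` for all `j ≥ 1`. -/
theorem stmt_18 {N : ℕ} (A : Module.End ℂ (EuclideanSpace ℂ (Fin N)))
    (hA : Function.Bijective A)
    (P : Submodule ℂ (EuclideanSpace ℂ (Fin N)))
    (ω : ℕ → ℂ) (hω : ∀ j, ω j ≠ 0)
    (b1 b2 : EuclideanSpace ℂ (Fin N)) (J : ℕ)
    (M Q : ℕ → Submodule ℂ (EuclideanSpace ℂ (Fin N)))
    (hM0 : M 0 = Submodule.span ℂ (Set.range fun k : ℕ => (A ^ k) b1)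
        ⊔ Submodule.span ℂ (Set.range fun k : ℕ => (A ^ k) b2))
    (hQ : ∀ j, Q j = if j ≤ J then Submodule.span ℂ {b2} else ⊥)
    (hrec : ∀ j, M (j + 1)
        = Submodule.map (1 - ω (j + 1) • A) (M j ⊓ Pᗮ) ⊔ Q (j + 1)) :
    ∀ j, M (j + 1) ≤ M j := by
  -- A-invariance of M 0
  have hAinv : ∀ b : EuclideanSpace ℂ (Fin N),
      Submodule.map A (Submodule.span ℂ (Set.range fun k : ℕ => (A ^ k) b))
        ≤ Submodule.span ℂ (Set.range fun k : ℕ => (A ^ k) b) := by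
    intro b
    rw [Submodule.map_span]
    apply Submodule.span_mono
    rintro _ ⟨_, ⟨k, rfl⟩, rfl⟩
    exact ⟨k + 1, by simp [pow_succ']⟩
  have hAM0 : ∀ x ∈ M 0, A x ∈ M 0 := by
    intro x hx
    have : Submodule.map A (M 0) ≤ M 0 := by
      rw [hM0, Submodule.map_sup]
      exact sup_le_sup (hAinv b1) (hAinv b2)
    exact this ⟨x, hx, rfl⟩
  have hQmono : ∀ j, Q (j + 1) ≤ Q j := by
    intro j
    rw [hQ, hQ]
    by_cases h : j + 1 ≤ J
    · rw [if_pos h, if_pos (by omega)]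
    · rw [if_neg h]; exact bot_le
  have hQM : ∀ j, Q (j + 1) ≤ M (j + 1) := fun j => (hrec j) ▸ le_sup_right
  have hb2 : b2 ∈ M 0 := by
    rw [hM0]
    exact Submodule.mem_sup_right (Submodule.subset_span ⟨0, by simp⟩)
  intro j
  induction j with
  | zero =>
    rw [hrec 0]
    apply sup_le
    · rintro _ ⟨x, ⟨hx, _⟩, rfl⟩
      simp only [LinearMap.sub_apply, Module.End.one_apply, LinearMap.smul_apply]
      exact Submodule.sub_mem _ hx (Submodule.smul_mem _ _ (hAM0 x hx))
    · rw [hQ]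
      by_cases h : 1 ≤ J
      · rw [if_pos h]
        exact Submodule.span_le.mpr (by simpa using hb2)
      · rw [if_neg h]; exact bot_le
  | succ j ih =>
    rw [hrec (j + 1)]
    apply sup_le
    · rintro _ ⟨x, ⟨hx, hxP⟩, rfl⟩
      -- x ∈ M (j+1) ⊓ Pᗮ ⊆ M j ⊓ Pᗮ, so (1 - ω(j+1)•A) x ∈ M (j+1)
      have h1 : (1 - ω (j + 1) • A) x ∈ M (j + 1) := by
        rw [hrec j]
        exact Submodule.mem_sup_left ⟨x, ⟨ih hx, hxP⟩, rfl⟩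
      -- hence A x ∈ M (j+1)
      have hAx : A x ∈ M (j + 1) := by
        have h2 : (ω (j + 1))⁻¹ • (x - (1 - ω (j + 1) • A) x) ∈ M (j + 1) :=
          Submodule.smul_mem _ _ (Submodule.sub_mem _ hx h1)
        have h3 : (ω (j + 1))⁻¹ • (x - (1 - ω (j + 1) • A) x) = A x := by
          simp only [LinearMap.sub_apply, Module.End.one_apply, LinearMap.smul_apply]
          rw [sub_sub_cancel, smul_smul, inv_mul_cancel₀ (hω (j + 1)), one_smul]
        rwa [h3] at h2
      simp only [LinearMap.sub_apply, Module.End.one_apply, LinearMap.smul_apply]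
      exact Submodule.sub_mem _ hx (Submodule.smul_mem _ _ hAx)
    · exact le_trans (hQmono (j + 1)) (hQM j)
end
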